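/- arXiv:1211.0952 — 2 statements merged into one kernel-verified Lean document; each statement's English description precedes it below -/
import Mathlib

section
/- Let q, r be points in the plane with x(q) < x(r) and let p be a point with p ∈ lss(q,r) (p is strictly below segment qr and x(q) < x(p) < x(r)). Let q', q'' and r', r'' be points in convex position with q', q, q'', r', r, r'' appearing in this x-order on a common upper convex chain. Then at least one of the following holds: x(p) ∈ [x(q'), x(q'')], or p ∈ lss(q'', r'), or x(p) ∈ [x(r'), x(r'')]. -/
/-- `p` lies strictly below the line through `a` and `b` (for `a.1 < b.1`). -/
def StrictlyBelowLine (a b p : ℝ × ℝ) : Prop :=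
  (b.1 - a.1) * (p.2 - a.2) < (b.2 - a.2) * (p.1 - a.1)

/-- The open lower semislab of `a, b` (with `a.1 < b.1`): points strictly between the
downward vertical rays through `a` and `b` and strictly below the segment `ab`. -/
def Lss (a b p : ℝ × ℝ) : Prop :=
  a.1 < p.1 ∧ p.1 < b.1 ∧ StrictlyBelowLine a b p

/-- Right turn (clockwise, or collinear) of the ordered triple `a, b, c`: the signed area
is nonpositive, as along an upper convex chain read left to right. -/
def RightTurn (a b c : ℝ × ℝ) : Prop :=
  (b.1 - a.1) * (c.2 - a.2) - (b.2 - a.2) * (c.1 - a.1) ≤ 0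

/-- (Lemma `lem:extremal->V-extremal`, Fig. `fig:v-extremal`.)
Let `q, r` with `x(q) < x(r)` and `p ∈ lss(q,r)`.  Let `q', q, q'', r', r, r''` be six
points in convex position appearing in this `x`-order on a common upper convex chain
(every ordered triple makes a right turn).  Then `x(p) ∈ [x(q'), x(q'')]`, or
`p ∈ lss(q'', r')`, or `x(p) ∈ [x(r'), x(r'')]`. -/
theorem stmt12 (q' q q'' r' r r'' p : ℝ × ℝ)
    (hx1 : q'.1 < q.1) (hx2 : q.1 < q''.1) (hx3 : q''.1 ≤ r'.1)
    (hx4 : r'.1 < r.1) (hx5 : r.1 < r''.1)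
    (hchain : ∀ i j k : Fin 6, i < j → j < k →
      RightTurn (![q', q, q'', r', r, r''] i) (![q', q, q'', r', r, r''] j)
        (![q', q, q'', r', r, r''] k))
    (hp : Lss q r p) :
    (q'.1 ≤ p.1 ∧ p.1 ≤ q''.1) ∨ Lss q'' r' p ∨ (r'.1 ≤ p.1 ∧ p.1 ≤ r''.1) := by
  obtain ⟨hqp, hpr, hbelow⟩ := hp
  rcases le_or_gt p.1 q''.1 with h1 | h1
  · exact Or.inl ⟨le_of_lt (hx1.trans hqp), h1⟩
  rcases le_or_gt r'.1 p.1 with h2 | h2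
  · exact Or.inr (Or.inr ⟨h2, le_of_lt (hpr.trans hx5)⟩)
  have hx3' : q''.1 < r'.1 := h1.trans h2
  refine Or.inr (Or.inl ⟨h1, h2, ?_⟩)
  have c1 := hchain 1 2 3 (by decide) (by decide)
  have c2 := hchain 2 3 4 (by decide) (by decide)
  simp [RightTurn] at c1 c2
  unfold StrictlyBelowLine at hbelow ⊢
  nlinarith [mul_lt_mul_of_pos_left hbelow (sub_pos.mpr hx3'),
    mul_le_mul_of_nonneg_left c1 (sub_pos.mpr hpr).le,
    mul_le_mul_of_nonneg_left c2 (sub_pos.mpr hqp).le]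
end

section
/- Suppose for every canonical direction v_i there is a V-extremal point of P lying strictly above the line ℓ_i (equivalently, in ℓ_i⁺). Then the pencils of any two adjacent V-extremal points e₁, e₂ either overlap or share a vertical slab boundary: if they did not, there would be an edge a of the canonical hull C strictly between the pencil slabs of e₁ and e₂, visible from neither, yet some extremal point x of P must see a, and x can lie neither left of e₁ nor right of e₂ nor strictly between them, a contradiction. -/
/-- Scalar product of a planar point with a direction. -/
def dot2 (a v : ℝ × ℝ) : ℝ := a.1 * v.1 + a.2 * v.2

/-- Slopes are monotone along the clockwise order. -/
lemma slopeMono (k : ℕ) (v : Fin k → ℝ × ℝ)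
    (hup : ∀ i, 0 < (v i).2)
    (hcw : ∀ (i : Fin k) (h : (i : ℕ) + 1 < k),
      (v i).1 * (v ⟨(i : ℕ) + 1, h⟩).2 - (v i).2 * (v ⟨(i : ℕ) + 1, h⟩).1 < 0) :
    ∀ a b : Fin k, a ≤ b → (v a).1 * (v b).2 ≤ (v b).1 * (v a).2 := by
  have key : ∀ n : ℕ, ∀ a b : Fin k, (b : ℕ) = (a : ℕ) + n →
      (v a).1 * (v b).2 ≤ (v b).1 * (v a).2 := by
    intro n
    induction n with
    | zero =>
      intro a b hab
      have : a = b := Fin.ext (by omega)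
      subst this
      exact le_of_eq (by ring)
    | succ m ih =>
      intro a b hab
      have hc : (a : ℕ) + m < k := by omega
      set c : Fin k := ⟨(a : ℕ) + m, hc⟩ with hcdef
      have h1 : (v a).1 * (v c).2 ≤ (v c).1 * (v a).2 := ih a c rfl
      have h2 : (v c).1 * (v b).2 < (v b).1 * (v c).2 := by
        have hb : ((c : ℕ)) + 1 < k := by simp [hcdef]; omega
        have := hcw c hb
        have hbe : b = ⟨(c : ℕ) + 1, hb⟩ := Fin.ext (by simp [hcdef]; omega)
        rw [hbe]; linarith
      have pa := hup a; have pb := hup b; have pc := hup c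
      nlinarith [mul_pos pa pb, mul_pos pa pc, mul_pos pb pc]
  intro a b hab
  exact key ((b : ℕ) - (a : ℕ)) a b (by omega)

/-- (Claim `clm:overlap`.)  The canonical hull `C = ⋂ᵢ ℓᵢ⁻` is bounded
by lines `ℓᵢ` (value `t i`, normal to the clockwise-ordered upward directions `v i`),
the `i`-th edge of `C` being supported by `ℓᵢ`; a point `q` sees edge `i` iff
`t i < ⟨q, v i⟩` (i.e. `q ∈ ℓᵢ⁺`), and the pencil slab of a point outside `C` spans
exactly the edges it sees.  Let `e i ∈ P` be the extremal point of `P` for direction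
`v i`.  Suppose every line `ℓᵢ` has some V-extremal point strictly above it, and let
`e j₁, e j₂` be adjacent V-extremal points (`x(e j₁) < x(e j₂)` and no V-extremal point
has `x`-coordinate strictly between).  Then their pencils overlap or share a vertical
slab boundary: there is no edge `i` of `C` lying strictly between them, i.e. with all
edges seen by `e j₁` strictly to its left and all edges seen by `e j₂` strictly to its
right. -/
theorem stmt19 (k : ℕ) (v : Fin k → ℝ × ℝ) (t : Fin k → ℝ)
    (P : Finset (ℝ × ℝ)) (e : Fin k → ℝ × ℝ)
    (hup : ∀ i, 0 < (v i).2)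
    (hcw : ∀ (i : Fin k) (h : (i : ℕ) + 1 < k),
      (v i).1 * (v ⟨(i : ℕ) + 1, h⟩).2 - (v i).2 * (v ⟨(i : ℕ) + 1, h⟩).1 < 0)
    (hext : ∀ i : Fin k, e i ∈ P ∧ ∀ q ∈ P, dot2 q (v i) ≤ dot2 (e i) (v i))
    (habove : ∀ i : Fin k, ∃ j : Fin k, t i < dot2 (e j) (v i))
    (j₁ j₂ : Fin k) (hx12 : (e j₁).1 < (e j₂).1)
    (hadj : ∀ j : Fin k, ¬ ((e j₁).1 < (e j).1 ∧ (e j).1 < (e j₂).1)) :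
    ∀ i : Fin k, ¬ ((∀ i' : Fin k, t i' < dot2 (e j₁) (v i') → i' < i) ∧
      (∀ i' : Fin k, t i' < dot2 (e j₂) (v i') → i < i')) := by
  intro i hi
  obtain ⟨h1, h2⟩ := hi
  -- every e m sees its own edge m
  have hsees : ∀ m : Fin k, t m < dot2 (e m) (v m) := by
    intro m
    obtain ⟨j', hj'⟩ := habove m
    exact lt_of_lt_of_le hj' ((hext m).2 _ (hext j').1)
  have hj1i : j₁ < i := h1 j₁ (hsees j₁)
  have hij2 : i < j₂ := h2 j₂ (hsees j₂)
  obtain ⟨j, hj⟩ := habove i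
  have hne := hadj j
  rcases le_or_gt (e j).1 (e j₁).1 with hL | hR
  · -- e j lies weakly left of e j₁; then e j₁ also sees edge i
    have hda : 0 ≤ dot2 (e j₁) (v j₁) - dot2 (e j) (v j₁) := by
      have := (hext j₁).2 (e j) (hext j).1; linarith
    have hs := slopeMono k v hup hcw j₁ i (le_of_lt hj1i)
    have hd1 : 0 ≤ (e j₁).1 - (e j).1 := by linarith
    have hsee : 0 ≤ dot2 (e j₁) (v i) - dot2 (e j) (v i) := by
      have pa := hup j₁; have pi := hup i
      simp only [dot2] at hda ⊢
      nlinarith [mul_nonneg hd1 (sub_nonneg.mpr hs), mul_nonneg hda pi.le]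
    exact absurd (h1 i (by linarith)) (lt_irrefl i)
  · -- e j lies weakly right of e j₂; then e j₂ also sees edge i
    have hR2 : (e j₂).1 ≤ (e j).1 := le_of_not_gt fun h' => hne ⟨hR, h'⟩
    have hda : 0 ≤ dot2 (e j₂) (v j₂) - dot2 (e j) (v j₂) := by
      have := (hext j₂).2 (e j) (hext j).1; linarith
    have hs := slopeMono k v hup hcw i j₂ (le_of_lt hij2)
    have hd1 : (e j₂).1 - (e j).1 ≤ 0 := by linarith
    have hsee : 0 ≤ dot2 (e j₂) (v i) - dot2 (e j) (v i) := by
      have pa := hup j₂; have pi := hup i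
      simp only [dot2] at hda ⊢
      nlinarith [mul_nonneg (neg_nonneg.mpr hd1) (sub_nonneg.mpr hs), mul_nonneg hda pi.le]
    exact absurd (h2 i (by linarith)) (lt_irrefl i)
end
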